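/- arXiv:1107.0462 — 3 statements merged into one kernel-verified Lean document; each statement's English description precedes it below -/
import Mathlib

section
/- For any elements a, b, c in the Cayley–Dickson algebra A^n obtained from R by n steps of the Cayley–Dickson doubling, the real part of the associator [a,b,c] = (ab)c − a(bc) vanishes: Re([a,b,c]) = 0. -/
/-- The Cayley–Dickson algebra `A^n` obtained from `ℝ` by `n` doublings. -/
def CD : ℕ → Type
  | 0 => ℝ
  | n + 1 => CD n × CD n

namespace CD

def ofReal (r : ℝ) : CD 0 := r
def toReal (a : CD 0) : ℝ := a

noncomputable def add : {n : ℕ} → CD n → CD n → CD n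
  | 0, a, b => ofReal (toReal a + toReal b)
  | _ + 1, a, b => (add a.1 b.1, add a.2 b.2)

noncomputable def neg : {n : ℕ} → CD n → CD n
  | 0, a => ofReal (-toReal a)
  | _ + 1, a => (neg a.1, neg a.2)

noncomputable def sub {n : ℕ} (a b : CD n) : CD n := add a (neg b)

/-- Cayley–Dickson conjugation: `(a,b)* = (a*, -b)`. -/
noncomputable def conj : {n : ℕ} → CD n → CD n
  | 0, a => a
  | _ + 1, a => (conj a.1, neg a.2)

/-- Cayley–Dickson product: `(a,b)(c,d) = (ac - d*b, da + bc*)`. -/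
noncomputable def mul : {n : ℕ} → CD n → CD n → CD n
  | 0, a, b => ofReal (toReal a * toReal b)
  | _ + 1, a, b =>
      (sub (mul a.1 b.1) (mul (conj b.2) a.2), add (mul b.2 a.1) (mul a.2 (conj b.1)))

noncomputable def zero : (n : ℕ) → CD n
  | 0 => ofReal 0
  | n + 1 => (zero n, zero n)

/-- The real part `Re(a) = (a + a*)/2`, read off as a real number. -/
noncomputable def re : {n : ℕ} → CD n → ℝ
  | 0, a => toReal a
  | _ + 1, a => re a.1

/-- The standard Euclidean inner product under the identification `A^n = ℝ^(2^n)`. -/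
noncomputable def inner : {n : ℕ} → CD n → CD n → ℝ
  | 0, a, b => toReal a * toReal b
  | _ + 1, a, b => inner a.1 b.1 + inner a.2 b.2

end CD

/-!
Write `⟨·,·⟩` for the Euclidean inner product and `x*` for the conjugate. The real part of a
product is `Re (x y) = ⟨x, y*⟩`, and right multiplication by `b` is adjoint to right
multiplication by `b*`. Together with `(b c)* = c* b*` this gives
`Re ((a b) c) = ⟨a b, c*⟩ = ⟨a, c* b*⟩ = ⟨a, (b c)*⟩ = Re (a (b c))`.
-/

namespace CD

protected theorem neg_add : ∀ {n} (a b : CD n), neg (add a b) = add (neg a) (neg b)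
  | 0, a, b => neg_add (toReal a) (toReal b)
  | _ + 1, a, b => Prod.ext (CD.neg_add a.1 b.1) (CD.neg_add a.2 b.2)

protected theorem neg_neg : ∀ {n} (a : CD n), neg (neg a) = a
  | 0, a => neg_neg (toReal a)
  | _ + 1, a => Prod.ext (CD.neg_neg a.1) (CD.neg_neg a.2)

protected theorem add_comm : ∀ {n} (a b : CD n), add a b = add b a
  | 0, a, b => add_comm (toReal a) (toReal b)
  | _ + 1, a, b => Prod.ext (CD.add_comm a.1 b.1) (CD.add_comm a.2 b.2)

protected theorem neg_sub {n} (a b : CD n) : neg (sub a b) = sub (neg a) (neg b) :=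
  CD.neg_add a (neg b)

theorem conj_neg : ∀ {n} (a : CD n), conj (neg a) = neg (conj a)
  | 0, _ => rfl
  | _ + 1, a => Prod.ext (conj_neg a.1) rfl

theorem conj_conj : ∀ {n} (a : CD n), conj (conj a) = a
  | 0, _ => rfl
  | _ + 1, a => Prod.ext (conj_conj a.1) (CD.neg_neg a.2)

theorem conj_add : ∀ {n} (a b : CD n), conj (add a b) = add (conj a) (conj b)
  | 0, _, _ => rfl
  | _ + 1, a, b => Prod.ext (conj_add a.1 b.1) (CD.neg_add a.2 b.2)

theorem conj_sub {n} (a b : CD n) : conj (sub a b) = sub (conj a) (conj b) := by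
  rw [sub, conj_add, conj_neg, sub]

-- Proved jointly: because of the conjugates in the product, each half of the inductive step
-- needs both halves one level down.
theorem neg_mul_and_mul_neg : ∀ {n} (a b : CD n),
    mul (neg a) b = neg (mul a b) ∧ mul a (neg b) = neg (mul a b)
  | 0, a, b => ⟨neg_mul (toReal a) (toReal b), mul_neg (toReal a) (toReal b)⟩
  | n + 1, a, b => by
    have neg_mul' (x y : CD n) : mul (neg x) y = neg (mul x y) := (neg_mul_and_mul_neg x y).1
    have mul_neg' (x y : CD n) : mul x (neg y) = neg (mul x y) := (neg_mul_and_mul_neg x y).2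
    constructor <;>
      exact Prod.ext (by simp only [mul, neg, conj_neg, neg_mul', mul_neg', CD.neg_sub])
        (by simp only [mul, neg, conj_neg, neg_mul', mul_neg', CD.neg_add])

protected theorem neg_mul {n} (a b : CD n) : mul (neg a) b = neg (mul a b) :=
  (neg_mul_and_mul_neg a b).1

protected theorem mul_neg {n} (a b : CD n) : mul a (neg b) = neg (mul a b) :=
  (neg_mul_and_mul_neg a b).2

theorem conj_mul : ∀ {n} (a b : CD n), conj (mul a b) = mul (conj b) (conj a)
  | 0, a, b => mul_comm (toReal a) (toReal b)
  | _ + 1, a, b => by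
    simp only [mul, conj, conj_sub, conj_mul, conj_conj, conj_neg, CD.neg_neg, CD.neg_mul,
      CD.mul_neg, CD.neg_add]
    exact Prod.ext rfl (CD.add_comm _ _)

theorem inner_comm : ∀ {n} (a b : CD n), inner a b = inner b a
  | 0, a, b => mul_comm (toReal a) (toReal b)
  | _ + 1, a, b => by rw [inner, inner, inner_comm a.1, inner_comm a.2]

theorem inner_neg_left : ∀ {n} (a b : CD n), inner (neg a) b = -inner a b
  | 0, a, b => neg_mul (toReal a) (toReal b)
  | _ + 1, a, b => by simp only [inner, neg, inner_neg_left, neg_add]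

theorem inner_neg_right {n} (a b : CD n) : inner a (neg b) = -inner a b := by
  rw [inner_comm, inner_neg_left, inner_comm]

theorem inner_add_left : ∀ {n} (a b c : CD n), inner (add a b) c = inner a c + inner b c
  | 0, a, b, c => add_mul (toReal a) (toReal b) (toReal c)
  | _ + 1, a, b, c => by simp only [inner, add, inner_add_left]; ring

theorem inner_add_right {n} (a b c : CD n) : inner a (add b c) = inner a b + inner a c := by
  rw [inner_comm, inner_add_left, inner_comm b, inner_comm c]

theorem inner_sub_left {n} (a b c : CD n) : inner (sub a b) c = inner a c - inner b c := by
  rw [sub, inner_add_left, inner_neg_left, sub_eq_add_neg]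

theorem inner_sub_right {n} (a b c : CD n) : inner a (sub b c) = inner a b - inner a c := by
  rw [sub, inner_add_right, inner_neg_right, sub_eq_add_neg]

theorem inner_conj_conj : ∀ {n} (a b : CD n), inner (conj a) (conj b) = inner a b
  | 0, _, _ => rfl
  | _ + 1, a, b => by
    rw [inner, inner, conj, conj, inner_conj_conj, inner_neg_left, inner_neg_right, neg_neg]

theorem re_sub : ∀ {n} (a b : CD n), re (sub a b) = re a - re b
  | 0, a, b => (sub_eq_add_neg (toReal a) (toReal b)).symm
  | _ + 1, a, b => re_sub a.1 b.1

theorem re_mul : ∀ {n} (a b : CD n), re (mul a b) = inner a (conj b)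
  | 0, _, _ => rfl
  | _ + 1, a, b => by
    simp only [re, mul, conj, inner, re_sub, re_mul, inner_neg_right]
    rw [inner_comm (conj b.2), inner_conj_conj, sub_eq_add_neg]

-- Proved jointly: the inductive step for either identity uses both.
theorem inner_mul_adjoint : ∀ {n} (a b c : CD n),
    inner (mul a b) c = inner a (mul c (conj b)) ∧
    inner (mul a b) c = inner b (mul (conj a) c)
  | 0, a, b, c => by
    constructor
    · show toReal a * toReal b * toReal c = toReal a * (toReal c * toReal b); ring
    · show toReal a * toReal b * toReal c = toReal b * (toReal a * toReal c); ring
  | n + 1, a, b, c => by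
    have right (x y z : CD n) : inner (mul x y) z = inner x (mul z (conj y)) :=
      (inner_mul_adjoint x y z).1
    have left (x y z : CD n) : inner (mul x y) z = inner y (mul (conj x) z) :=
      (inner_mul_adjoint x y z).2
    have conj_swap (x y z : CD n) : inner (conj x) (mul y z) = inner x (mul (conj z) (conj y)) := by
      rw [← inner_conj_conj (conj x), conj_conj, conj_mul]
    simp only [mul, inner, conj, inner_sub_left, inner_add_left, inner_sub_right,
      inner_add_right, inner_neg_right, CD.neg_mul, CD.mul_neg, conj_neg, conj_conj]
    constructor
    · rw [right a.1 b.1, left (conj b.2) a.2, conj_conj, left b.2 a.1, right a.2 (conj b.1),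
        conj_conj]
      ring
    · rw [left a.1 b.1, right (conj b.2) a.2, right b.2 a.1, left a.2 (conj b.1),
        conj_swap b.2, conj_swap b.1, conj_conj]
      ring

end CD

/-- In every Cayley–Dickson algebra `A^n`, the real part of the
associator `[a,b,c] = (ab)c - a(bc)` vanishes. -/
theorem re_associator_eq_zero (n : ℕ) (a b c : CD n) :
    CD.re (CD.sub (CD.mul (CD.mul a b) c) (CD.mul a (CD.mul b c))) = 0 := by
  rw [CD.re_sub, CD.re_mul, CD.re_mul, CD.conj_mul, (CD.inner_mul_adjoint a b _).1, sub_self]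
end

section
/- The eight complex structures J_1,…,J_8 on R^16 together with the conjugation-twisted complex multiplication L = (C_q-twisted) block extension of L_i give 9 pairwise anticommuting complex structures on R^{2·16}: concretely, on R^32 = (R^16)^2 the matrices diag_{16,2}(J_α) for α=1,…,8 together with diag_{16,2}(C_1)·block_{2,16}(L_i^C) are skew-symmetric, square to −Id_32, and pairwise anticommute. -/
/-- The octonions, as the third Cayley–Dickson algebra. -/
noncomputable abbrev Oct : Type := CD 3

noncomputable def r2 (a b : ℝ) : CD 1 := (CD.ofReal a, CD.ofReal b)
noncomputable def r4 (a b c d : ℝ) : CD 2 := (r2 a b, r2 c d)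
noncomputable def r8 (a b c d e f g h : ℝ) : Oct := (r4 a b c d, r4 e f g h)

/-- The standard basis `1, i, j, k, e, f, g, h` of the octonions. -/
noncomputable def octBasis : Fin 8 → Oct :=
  ![r8 1 0 0 0 0 0 0 0, r8 0 1 0 0 0 0 0 0, r8 0 0 1 0 0 0 0 0, r8 0 0 0 1 0 0 0 0,
    r8 0 0 0 0 1 0 0 0, r8 0 0 0 0 0 1 0 0, r8 0 0 0 0 0 0 1 0, r8 0 0 0 0 0 0 0 1]
open Matrix

/-- Reindexing a square matrix along an equality of dimensions. -/
noncomputable def castM {a b : ℕ} (h : a = b) (M : Matrix (Fin a) (Fin a) ℝ) :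
    Matrix (Fin b) (Fin b) ℝ :=
  Matrix.reindex (finCongr h) (finCongr h) M

/-- `diagExt m n A = Id_n ⊗ A`: the block-diagonal matrix with `n` copies of
the `m × m` matrix `A` along the diagonal. -/
noncomputable def diagExt (m n : ℕ) (A : Matrix (Fin m) (Fin m) ℝ) :
    Matrix (Fin (m * n)) (Fin (m * n)) ℝ :=
  Matrix.of fun i j =>
    if hm : 0 < m then
      if i.val / m = j.val / m then
        A ⟨i.val % m, Nat.mod_lt _ hm⟩ ⟨j.val % m, Nat.mod_lt _ hm⟩
      else 0
    else 0

/-- `blockExt m n A = A ⊗ Id_n`: each entry `a` of the `m × m` matrix `A` is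
replaced by the `n × n` block `a • Id_n`. -/
noncomputable def blockExt (m n : ℕ) (A : Matrix (Fin m) (Fin m) ℝ) :
    Matrix (Fin (m * n)) (Fin (m * n)) ℝ :=
  Matrix.of fun i j =>
    if hn : 0 < n then
      if i.val % n = j.val % n then
        A ⟨i.val / n, (Nat.div_lt_iff_lt_mul hn).2 i.isLt⟩
          ⟨j.val / n, (Nat.div_lt_iff_lt_mul hn).2 j.isLt⟩
      else 0
    else 0

/-- The matrix (in the standard orthonormal basis of `𝕆 = ℝ^8`) of right
multiplication `R_u : x ↦ x·u` by the octonion `u`. -/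
noncomputable def Rmat (u : Oct) : Matrix (Fin 8) (Fin 8) ℝ :=
  Matrix.of fun r c => CD.inner (CD.mul (octBasis c) u) (octBasis r)

/-- The matrix (in the standard orthonormal basis of `𝕆 = ℝ^8`) of left
multiplication `L_u : x ↦ u·x` by the octonion `u`. -/
noncomputable def Lmat (u : Oct) : Matrix (Fin 8) (Fin 8) ℝ :=
  Matrix.of fun r c => CD.inner (CD.mul u (octBasis c)) (octBasis r)

noncomputable def toMat16 (M : Matrix (Fin 8 ⊕ Fin 8) (Fin 8 ⊕ Fin 8) ℝ) :
    Matrix (Fin 16) (Fin 16) ℝ :=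
  Matrix.reindex (finSumFinEquiv.trans (finCongr (show 8 + 8 = 16 by norm_num)))
    (finSumFinEquiv.trans (finCongr (show 8 + 8 = 16 by norm_num))) M

/-- The eight standard `Spin(9)` complex structures on `ℝ^16` (indexed `0,…,7`
for `J₁,…,J₈`): `J₁ = [[0,-Id₈],[Id₈,0]]` and `J_{α+1} = [[0,R_u],[R_u,0]]` for
the imaginary octonion units `u = i,j,k,e,f,g,h`. -/
noncomputable def J16 (α : Fin 8) : Matrix (Fin 16) (Fin 16) ℝ :=
  toMat16 <|
    if α = 0 then Matrix.fromBlocks 0 (-1) 1 0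
    else Matrix.fromBlocks 0 (Rmat (octBasis α)) (Rmat (octBasis α)) 0

/-- The diagonal involution `C_N` changing sign on the last half of the
coordinates of `ℝ^N`. -/
noncomputable def Cmat (N : ℕ) : Matrix (Fin N) (Fin N) ℝ :=
  Matrix.diagonal fun i => if 2 * i.val < N then 1 else -1

/-- The diagonal extensions `diag_{16,2}(J_α)` on `ℝ^32`. -/
noncomputable def A32 (α : Fin 8) : Matrix (Fin 32) (Fin 32) ℝ :=
  castM (by norm_num) (diagExt 16 2 (J16 α))

/-- `L_i^ℂ = [[0,-1],[1,0]]`. -/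
noncomputable def LiC : Matrix (Fin 2) (Fin 2) ℝ := !![0, -1; 1, 0]

/-- The conjugation-twisted complex multiplication
`diag_{16,2}(C₁) · block_{2,16}(L_i^ℂ)` on `ℝ^32`. -/
noncomputable def L32 : Matrix (Fin 32) (Fin 32) ℝ :=
  castM (by norm_num) (diagExt 16 2 (Cmat 16)) * castM (by norm_num) (blockExt 2 16 LiC)

/-- The nine matrices of Statement 15: `diag_{16,2}(J₁),…,diag_{16,2}(J₈)`
together with `diag_{16,2}(C₁) · block_{2,16}(L_i^ℂ)`. -/
noncomputable def F32 (β : Fin 9) : Matrix (Fin 32) (Fin 32) ℝ :=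
  if h : β.val < 8 then A32 ⟨β.val, h⟩ else L32


/-!
Right multiplication `R_u` by an imaginary octonion `u` is skew, and the linearised right
alternative law `(x v) u + (x u) v = x (v u + u v) = -2⟨u, v⟩ x` gives
`R_u R_v + R_v R_u = -2⟨u, v⟩`. Hence `J₁, …, J₈` are pairwise anticommuting orthogonal complex
structures on `ℝ^16 = 𝕆 ⊕ 𝕆`, and, being block off-diagonal, they anticommute with the grading
`C₁ = diag(Id₈, -Id₈)`. On `ℝ^32 = ℝ^2 ⊗ ℝ^16` the nine matrices are `Id₂ ⊗ J_α` and
`L_i^ℂ ⊗ C₁`, and `(A ⊗ B)(A' ⊗ B') = AA' ⊗ BB'` reduces every relation to the factors.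
-/

open scoped Kronecker

namespace Oct

lemma exists_eq_r8 (x : Oct) : ∃ a b c d e f g h : ℝ, x = r8 a b c d e f g h := by
  obtain ⟨⟨⟨a, b⟩, ⟨c, d⟩⟩, ⟨⟨e, f⟩, ⟨g, h⟩⟩⟩ := x
  exact ⟨a, b, c, d, e, f, g, h, rfl⟩

lemma re_r8 (a b c d e f g h : ℝ) : CD.re (r8 a b c d e f g h) = a := rfl

lemma mul_r8 (a b c d e f g h a' b' c' d' e' f' g' h' : ℝ) :
    CD.mul (r8 a b c d e f g h) (r8 a' b' c' d' e' f' g' h') =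
    r8 (a*a' - b*b' - c*c' - d*d' - e*e' - f*f' - g*g' - h*h')
      (a*b' + a'*b + c*d' - c'*d + e*f' - e'*f - g*h' + g'*h)
      (a*c' + a'*c - b*d' + b'*d + e*g' - e'*g + f*h' - f'*h)
      (a*d' + a'*d + b*c' - b'*c + e*h' - e'*h - f*g' + f'*g)
      (a*e' + a'*e - b*f' + b'*f - c*g' + c'*g - d*h' + d'*h)
      (a*f' + a'*f + b*e' - b'*e - c*h' + c'*h + d*g' - d'*g)
      (a*g' + a'*g + b*h' - b'*h + c*e' - c'*e - d*f' + d'*f)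
      (a*h' + a'*h - b*g' + b'*g + c*f' - c'*f + d*e' - d'*e) := by
  simp only [r8, r4, r2, CD.mul, CD.sub, CD.add, CD.neg, CD.conj, CD.ofReal, CD.toReal]
  refine Prod.ext (Prod.ext (Prod.ext ?_ ?_) (Prod.ext ?_ ?_))
    (Prod.ext (Prod.ext ?_ ?_) (Prod.ext ?_ ?_)) <;> (show (_ : ℝ) = _; ring)

lemma inner_r8 (a b c d e f g h a' b' c' d' e' f' g' h' : ℝ) :
    CD.inner (r8 a b c d e f g h) (r8 a' b' c' d' e' f' g' h') =
    a*a' + b*b' + c*c' + d*d' + e*e' + f*f' + g*g' + h*h' := by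
  simp only [r8, r4, r2, CD.inner, CD.ofReal, CD.toReal]
  ring

lemma inner_octBasis (k l : Fin 8) :
    CD.inner (octBasis k) (octBasis l) = if k = l then 1 else 0 := by
  fin_cases k <;> fin_cases l <;> simp [octBasis, inner_r8]

lemma re_octBasis {k : Fin 8} (hk : k ≠ 0) : CD.re (octBasis k) = 0 := by
  fin_cases k <;> simp_all [octBasis, re_r8]

lemma sum_inner_octBasis_mul (x u y : Oct) :
    ∑ m, CD.inner (CD.mul (octBasis m) u) y * CD.inner x (octBasis m) =
      CD.inner (CD.mul x u) y := by
  obtain ⟨x0, x1, x2, x3, x4, x5, x6, x7, rfl⟩ := exists_eq_r8 x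
  obtain ⟨u0, u1, u2, u3, u4, u5, u6, u7, rfl⟩ := exists_eq_r8 u
  obtain ⟨y0, y1, y2, y3, y4, y5, y6, y7, rfl⟩ := exists_eq_r8 y
  simp only [octBasis, Fin.sum_univ_eight, Fin.isValue, cons_val_zero, cons_val_one, cons_val,
    mul_r8, inner_r8, one_mul, zero_mul, mul_one, mul_zero, sub_zero, zero_sub, add_zero, zero_add,
    neg_mul, sub_self]
  ring

lemma inner_mul_eq_neg_inner_mul {u : Oct} (hu : CD.re u = 0) (x y : Oct) :
    CD.inner (CD.mul x u) y = -CD.inner (CD.mul y u) x := by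
  obtain ⟨x0, x1, x2, x3, x4, x5, x6, x7, rfl⟩ := exists_eq_r8 x
  obtain ⟨u0, u1, u2, u3, u4, u5, u6, u7, rfl⟩ := exists_eq_r8 u
  obtain ⟨y0, y1, y2, y3, y4, y5, y6, y7, rfl⟩ := exists_eq_r8 y
  rw [re_r8] at hu
  subst hu
  simp only [mul_r8, inner_r8]
  ring

lemma inner_mul_mul_add_inner_mul_mul {u v : Oct} (hu : CD.re u = 0) (hv : CD.re v = 0)
    (x y : Oct) :
    CD.inner (CD.mul (CD.mul x v) u) y + CD.inner (CD.mul (CD.mul x u) v) y =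
      -2 * CD.inner u v * CD.inner x y := by
  obtain ⟨x0, x1, x2, x3, x4, x5, x6, x7, rfl⟩ := exists_eq_r8 x
  obtain ⟨u0, u1, u2, u3, u4, u5, u6, u7, rfl⟩ := exists_eq_r8 u
  obtain ⟨v0, v1, v2, v3, v4, v5, v6, v7, rfl⟩ := exists_eq_r8 v
  obtain ⟨y0, y1, y2, y3, y4, y5, y6, y7, rfl⟩ := exists_eq_r8 y
  rw [re_r8] at hu hv
  subst hu hv
  simp only [mul_r8, inner_r8]
  ring

end Oct

lemma Rmat_transpose {u : Oct} (hu : CD.re u = 0) : (Rmat u)ᵀ = -Rmat u := by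
  ext r c
  simp only [transpose_apply, Matrix.neg_apply, Rmat, of_apply]
  exact Oct.inner_mul_eq_neg_inner_mul hu _ _

lemma Rmat_mul_apply (u v : Oct) (r c : Fin 8) :
    (Rmat u * Rmat v) r c = CD.inner (CD.mul (CD.mul (octBasis c) v) u) (octBasis r) := by
  simp only [mul_apply, Rmat, of_apply]
  exact Oct.sum_inner_octBasis_mul _ _ _

lemma Rmat_mul_add_Rmat_mul {u v : Oct} (hu : CD.re u = 0) (hv : CD.re v = 0) :
    Rmat u * Rmat v + Rmat v * Rmat u = (-2 * CD.inner u v) • (1 : Matrix (Fin 8) (Fin 8) ℝ) := by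
  ext r c
  rw [Matrix.add_apply, Rmat_mul_apply, Rmat_mul_apply, Oct.inner_mul_mul_add_inner_mul_mul hu hv,
    Oct.inner_octBasis, Matrix.smul_apply, one_apply, smul_eq_mul]
  simp only [eq_comm]

lemma Rmat_octBasis_transpose {k : Fin 8} (hk : k ≠ 0) :
    (Rmat (octBasis k))ᵀ = -Rmat (octBasis k) :=
  Rmat_transpose (Oct.re_octBasis hk)

lemma Rmat_octBasis_mul_self {k : Fin 8} (hk : k ≠ 0) :
    Rmat (octBasis k) * Rmat (octBasis k) = -1 := by
  have h := Rmat_mul_add_Rmat_mul (Oct.re_octBasis hk) (Oct.re_octBasis hk)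
  rw [Oct.inner_octBasis, if_pos rfl, ← two_smul ℝ, mul_one,
    show (-2 : ℝ) = 2 * -1 by norm_num, mul_smul, neg_one_smul] at h
  exact smul_right_injective _ two_ne_zero h

lemma Rmat_octBasis_anticomm {k l : Fin 8} (hk : k ≠ 0) (hl : l ≠ 0) (hkl : k ≠ l) :
    Rmat (octBasis k) * Rmat (octBasis l) + Rmat (octBasis l) * Rmat (octBasis k) = 0 := by
  rw [Rmat_mul_add_Rmat_mul (Oct.re_octBasis hk) (Oct.re_octBasis hl), Oct.inner_octBasis,
    if_neg hkl, mul_zero, zero_smul]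

namespace Matrix

variable {α l m n p : Type*} [Ring α]

lemma kronecker_neg (A : Matrix l m α) (B : Matrix n p α) : A ⊗ₖ (-B) = -(A ⊗ₖ B) := by
  ext
  simp

lemma neg_kronecker (A : Matrix l m α) (B : Matrix n p α) : (-A) ⊗ₖ B = -(A ⊗ₖ B) := by
  ext
  simp

end Matrix

section CliffordFamily

variable {ι n m R : Type*} [Fintype n] [DecidableEq n] [Fintype m] [DecidableEq m] [CommRing R]

structure IsCliffordFamily (J : ι → Matrix n n R) : Prop where
  transpose_eq : ∀ i, (J i)ᵀ = -J i
  mul_self : ∀ i, J i * J i = -1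
  anticomm : ∀ i j, i ≠ j → J i * J j + J j * J i = 0

namespace IsCliffordFamily

variable {J : ι → Matrix n n R}

lemma reindex {n' : Type*} [Fintype n'] [DecidableEq n'] (h : IsCliffordFamily J) (e : n ≃ n') :
    IsCliffordFamily fun i => reindex e e (J i) where
  transpose_eq i := by
    rw [transpose_reindex, h.transpose_eq, ← coe_reindexAlgEquiv R R, map_neg]
  mul_self i := by
    rw [← coe_reindexAlgEquiv R R, ← map_mul, h.mul_self, map_neg, map_one]
  anticomm i j hij := by
    rw [← coe_reindexAlgEquiv R R, ← map_mul, ← map_mul, ← map_add, h.anticomm i j hij, map_zero]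

lemma one_kronecker (h : IsCliffordFamily J) :
    IsCliffordFamily fun i => (1 : Matrix m m R) ⊗ₖ J i where
  transpose_eq i := by
    rw [← kroneckerMap_transpose, transpose_one, h.transpose_eq, kronecker_neg]
  mul_self i := by
    rw [← mul_kronecker_mul, one_mul, h.mul_self, kronecker_neg, one_kronecker_one]
  anticomm i j hij := by
    rw [← mul_kronecker_mul, ← mul_kronecker_mul, ← kronecker_add, h.anticomm i j hij,
      kronecker_zero]

lemma snoc {k : ℕ} {J : Fin k → Matrix n n R} (h : IsCliffordFamily J) {K : Matrix n n R}
    (hKt : Kᵀ = -K) (hK : K * K = -1) (hJK : ∀ i, J i * K + K * J i = 0) :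
    IsCliffordFamily (Fin.snoc (α := fun _ => Matrix n n R) J K) where
  transpose_eq i := by
    induction i using Fin.lastCases with
    | last => simpa using hKt
    | cast i => simpa using h.transpose_eq i
  mul_self i := by
    induction i using Fin.lastCases with
    | last => simpa using hK
    | cast i => simpa using h.mul_self i
  anticomm i j hij := by
    induction i using Fin.lastCases <;> induction j using Fin.lastCases
    · exact absurd rfl hij
    · simpa [add_comm] using hJK _
    · simpa using hJK _
    · simpa using h.anticomm _ _ fun h => hij (congrArg _ h)

lemma kronecker_snoc {k : ℕ} {J : Fin k → Matrix n n R} (h : IsCliffordFamily J)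
    {C : Matrix n n R} (hCt : Cᵀ = C) (hC : C * C = 1) (hJC : ∀ i, J i * C + C * J i = 0)
    {L : Matrix m m R} (hLt : Lᵀ = -L) (hL : L * L = -1) :
    IsCliffordFamily (Fin.snoc (α := fun _ => Matrix (m × n) (m × n) R)
      (fun i => (1 : Matrix m m R) ⊗ₖ J i) (L ⊗ₖ C)) := by
  refine h.one_kronecker.snoc ?_ ?_ fun i => ?_
  · rw [← kroneckerMap_transpose, hLt, hCt, neg_kronecker]
  · rw [← mul_kronecker_mul, hL, hC, neg_kronecker, one_kronecker_one]
  · rw [← mul_kronecker_mul, ← mul_kronecker_mul, one_mul, mul_one, ← kronecker_add, hJC,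
      kronecker_zero]

end IsCliffordFamily

end CliffordFamily

section Blocks

variable {l m R : Type*} [Fintype l] [Fintype m] [DecidableEq l] [DecidableEq m] [Ring R]

lemma fromBlocks_offDiag_mul (B D : Matrix l m R) (B' D' : Matrix m l R) :
    fromBlocks 0 B B' 0 * fromBlocks 0 D D' 0 = fromBlocks (B * D') 0 0 (B' * D) := by
  simp [fromBlocks_multiply]

lemma fromBlocks_offDiag_anticomm_grading (B : Matrix l m R) (B' : Matrix m l R) :
    fromBlocks 0 B B' 0 * fromBlocks 1 0 0 (-1) + fromBlocks 1 0 0 (-1) * fromBlocks 0 B B' 0 =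
      0 := by
  simp [fromBlocks_multiply, fromBlocks_add]

end Blocks

noncomputable def J16Blocks (α : Fin 8) : Matrix (Fin 8 ⊕ Fin 8) (Fin 8 ⊕ Fin 8) ℝ :=
  if α = 0 then fromBlocks 0 (-1) 1 0
  else fromBlocks 0 (Rmat (octBasis α)) (Rmat (octBasis α)) 0

lemma isCliffordFamily_J16Blocks : IsCliffordFamily J16Blocks where
  transpose_eq α := by
    unfold J16Blocks
    split_ifs with hα
    · simp [fromBlocks_transpose, fromBlocks_neg]
    · simp [fromBlocks_transpose, fromBlocks_neg, Rmat_octBasis_transpose hα]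
  mul_self α := by
    unfold J16Blocks
    split_ifs with hα
    · simp [fromBlocks_offDiag_mul, ← fromBlocks_one, fromBlocks_neg]
    · simp [fromBlocks_offDiag_mul, ← fromBlocks_one, fromBlocks_neg, Rmat_octBasis_mul_self hα]
  anticomm α β hαβ := by
    unfold J16Blocks
    split_ifs with hα hβ hβ
    · exact absurd (hα.trans hβ.symm) hαβ
    · simp [fromBlocks_offDiag_mul, fromBlocks_add]
    · simp [fromBlocks_offDiag_mul, fromBlocks_add]
    · simp [fromBlocks_offDiag_mul, fromBlocks_add, Rmat_octBasis_anticomm hα hβ hαβ]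

lemma isCliffordFamily_J16 : IsCliffordFamily J16 :=
  isCliffordFamily_J16Blocks.reindex _

lemma Cmat_transpose (N : ℕ) : (Cmat N)ᵀ = Cmat N :=
  diagonal_transpose _

lemma Cmat_mul_self (N : ℕ) : Cmat N * Cmat N = 1 := by
  rw [Cmat, diagonal_mul_diagonal, ← diagonal_one]
  congr 1
  funext i
  split_ifs <;> norm_num

lemma Cmat_sixteen_eq : Cmat 16 = toMat16 (fromBlocks 1 0 0 (-1)) := by
  rw [toMat16, ← diagonal_one, diagonal_neg, fromBlocks_diagonal, reindex_apply,
    submatrix_diagonal_equiv, Cmat]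
  congr 1
  funext i
  obtain ⟨x, rfl⟩ := (finSumFinEquiv.trans (finCongr (show 8 + 8 = 16 by norm_num))).surjective i
  rw [Function.comp_apply, Equiv.symm_apply_apply]
  rcases x with x | x <;>
    simp only [finSumFinEquiv, Equiv.trans_apply, finCongr_apply, Equiv.coe_fn_mk, Sum.elim_inl,
      Sum.elim_inr, Fin.val_cast, Fin.val_castAdd, Fin.val_natAdd, ite_eq_left_iff,
      ite_eq_right_iff, not_lt] <;>
    omega

lemma J16_anticomm_Cmat (α : Fin 8) : J16 α * Cmat 16 + Cmat 16 * J16 α = 0 := by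
  obtain ⟨B, B', hB⟩ : ∃ B B', J16Blocks α = fromBlocks 0 B B' 0 := by
    unfold J16Blocks
    split_ifs <;> exact ⟨_, _, rfl⟩
  rw [Cmat_sixteen_eq, show J16 α = toMat16 (J16Blocks α) from rfl]
  simp only [toMat16, ← coe_reindexAlgEquiv ℝ ℝ, ← map_mul, ← map_add, hB,
    fromBlocks_offDiag_anticomm_grading, map_zero]

lemma LiC_transpose : LiCᵀ = -LiC := by
  ext i j
  fin_cases i <;> fin_cases j <;> simp [LiC]

lemma LiC_mul_self : LiC * LiC = -1 := by
  ext i j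
  fin_cases i <;> fin_cases j <;> simp [LiC]

lemma diagExt_eq_reindex_kronecker (m n : ℕ) (A : Matrix (Fin m) (Fin m) ℝ) :
    diagExt m n A = reindex (finProdFinEquiv.trans (finCongr (Nat.mul_comm n m)))
      (finProdFinEquiv.trans (finCongr (Nat.mul_comm n m)))
      ((1 : Matrix (Fin n) (Fin n) ℝ) ⊗ₖ A) := by
  ext i j
  rcases Nat.eq_zero_or_pos m with rfl | hm
  · exact absurd i.isLt (by simp)
  simp [diagExt, hm, one_apply, Fin.ext_iff, Fin.divNat, Fin.modNat]

lemma blockExt_eq_reindex_kronecker (m n : ℕ) (A : Matrix (Fin m) (Fin m) ℝ) :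
    blockExt m n A =
      reindex finProdFinEquiv finProdFinEquiv (A ⊗ₖ (1 : Matrix (Fin n) (Fin n) ℝ)) := by
  ext i j
  rcases Nat.eq_zero_or_pos n with rfl | hn
  · exact absurd i.isLt (by simp)
  simp [blockExt, hn, one_apply, Fin.ext_iff, Fin.divNat, Fin.modNat]

lemma A32_eq_reindex_kronecker (α : Fin 8) :
    A32 α = reindex finProdFinEquiv finProdFinEquiv ((1 : Matrix (Fin 2) (Fin 2) ℝ) ⊗ₖ J16 α) := by
  rw [A32, diagExt_eq_reindex_kronecker]
  rfl

lemma L32_eq_reindex_kronecker :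
    L32 = reindex finProdFinEquiv finProdFinEquiv (LiC ⊗ₖ Cmat 16) := by
  rw [L32, diagExt_eq_reindex_kronecker, blockExt_eq_reindex_kronecker]
  change reindex finProdFinEquiv finProdFinEquiv ((1 : Matrix (Fin 2) (Fin 2) ℝ) ⊗ₖ Cmat 16) *
    reindex finProdFinEquiv finProdFinEquiv (LiC ⊗ₖ (1 : Matrix (Fin 16) (Fin 16) ℝ)) = _
  rw [← coe_reindexAlgEquiv ℝ ℝ, ← map_mul, ← mul_kronecker_mul, one_mul, mul_one]

lemma F32_eq_reindex :
    F32 = fun β => reindex finProdFinEquiv finProdFinEquiv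
      (Fin.snoc (α := fun _ => Matrix (Fin 2 × Fin 16) (Fin 2 × Fin 16) ℝ)
        (fun α => (1 : Matrix (Fin 2) (Fin 2) ℝ) ⊗ₖ J16 α) (LiC ⊗ₖ Cmat 16) β) := by
  funext β
  rw [F32, Fin.snoc]
  split_ifs
  · exact A32_eq_reindex_kronecker _
  · exact L32_eq_reindex_kronecker

/-- On `ℝ^32`, the matrices `diag_{16,2}(J_α)` (`α = 1,…,8`)
together with `diag_{16,2}(C₁) · block_{2,16}(L_i^ℂ)` are nine skew-symmetric
matrices squaring to `-Id₃₂` and pairwise anticommuting. -/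
theorem nine_structures_on_R32 (β γ : Fin 9) :
    (F32 β)ᵀ = -F32 β ∧ F32 β * F32 β = -1 ∧
    (β ≠ γ → F32 β * F32 γ + F32 γ * F32 β = 0) := by
  have hF : IsCliffordFamily F32 := by
    rw [F32_eq_reindex]
    exact (isCliffordFamily_J16.kronecker_snoc (Cmat_transpose 16) (Cmat_mul_self 16)
      J16_anticomm_Cmat LiC_transpose LiC_mul_self).reindex _
  exact ⟨hF.transpose_eq β, hF.mul_self β, hF.anticomm β γ⟩
end

section
/- The left multiplications L_i, L_j, L_k, L_e, L_f, L_g, L_h by the seven imaginary octonion units are skew-symmetric endomorphisms of R^8 = O that square to −Id and pairwise anticommute; consequently, applied to the outward unit normal they give 7 orthonormal tangent vector fields on S^7, and their diagonal extensions give 7 orthonormal tangent vector fields on S^{8n−1} for every n. -/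
open Matrix

/-! For a purely imaginary octonion `u` the matrix of `L_u`, read off from the multiplication
table, is visibly skew-symmetric, and a direct computation gives
`L_u L_v + L_v L_u = -2⟨u, v⟩ Id`, the polarised form of `u(ux) = -|u|² x`. For the imaginary
units this is the Clifford relation `L_α L_β + L_β L_α = -2 δ_αβ Id`, and `A ↦ Id_n ⊗ A`
preserves both it and skew-symmetry. For skew-symmetric `A`, `B` in such a relation,
`⟨Ax, x⟩ = 0` and `2⟨Ax, Bx⟩ = -⟨x, (AB + BA)x⟩ = 2δ_αβ |x|²`. -/

open scoped Kronecker

theorem CD.toReal_ofReal (r : ℝ) : CD.toReal (CD.ofReal r) = r := rfl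

theorem exists_eq_r8 (u : Oct) : ∃ a b c d e f g h : ℝ, u = r8 a b c d e f g h := by
  obtain ⟨⟨⟨a, b⟩, c, d⟩, ⟨e, f⟩, g, h⟩ := u
  exact ⟨a, b, c, d, e, f, g, h, rfl⟩

theorem re_r8 (a b c d e f g h : ℝ) : CD.re (r8 a b c d e f g h) = a := rfl

theorem r8_mul_r8 (a b c d e f g h a' b' c' d' e' f' g' h' : ℝ) :
    CD.mul (r8 a b c d e f g h) (r8 a' b' c' d' e' f' g' h') =
      r8 (a * a' - b * b' - c * c' - d * d' - e * e' - f * f' - g * g' - h * h')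
        (a * b' + b * a' + c * d' - d * c' + e * f' - f * e' - g * h' + h * g')
        (a * c' - b * d' + c * a' + d * b' + e * g' + f * h' - g * e' - h * f')
        (a * d' + b * c' - c * b' + d * a' + e * h' - f * g' + g * f' - h * e')
        (a * e' - b * f' - c * g' - d * h' + e * a' + f * b' + g * c' + h * d')
        (a * f' + b * e' - c * h' + d * g' - e * b' + f * a' - g * d' + h * c')
        (a * g' + b * h' + c * e' - d * f' - e * c' + f * d' + g * a' - h * b')
        (a * h' - b * g' + c * f' + d * e' - e * d' - f * c' + g * b' + h * a') := by
  simp only [r8, r4, r2, CD.mul, CD.sub, CD.add, CD.neg, CD.conj, CD.toReal_ofReal]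
  congr 3 <;> congr 1 <;> ring

theorem r8_inner_r8 (a b c d e f g h a' b' c' d' e' f' g' h' : ℝ) :
    CD.inner (r8 a b c d e f g h) (r8 a' b' c' d' e' f' g' h') =
      a * a' + b * b' + c * c' + d * d' + e * e' + f * f' + g * g' + h * h' := by
  simp only [r8, r4, r2, CD.inner, CD.toReal_ofReal]
  ring

theorem Lmat_r8 (a b c d e f g h : ℝ) :
    Lmat (r8 a b c d e f g h) =
      !![a, -b, -c, -d, -e, -f, -g, -h;
        b, a, -d, c, -f, e, h, -g;
        c, d, a, -b, -g, -h, e, f;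
        d, -c, b, a, -h, g, -f, e;
        e, f, g, h, a, -b, -c, -d;
        f, -e, h, -g, b, a, d, -c;
        g, -h, -e, f, c, -d, a, b;
        h, g, -f, -e, d, c, -b, a] := by
  ext r s
  fin_cases r <;> fin_cases s <;> simp [Lmat, octBasis, r8_mul_r8, r8_inner_r8]

theorem Lmat_transpose_of_re_eq_zero {u : Oct} (hu : CD.re u = 0) : (Lmat u)ᵀ = -Lmat u := by
  obtain ⟨a, b, c, d, e, f, g, h, rfl⟩ := exists_eq_r8 u
  rw [re_r8] at hu
  subst hu
  rw [Lmat_r8]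
  ext r s
  fin_cases r <;> fin_cases s <;> simp

set_option maxHeartbeats 400000 in
theorem Lmat_mul_add_mul_of_re_eq_zero {u v : Oct} (hu : CD.re u = 0) (hv : CD.re v = 0) :
    Lmat u * Lmat v + Lmat v * Lmat u = -(2 * CD.inner u v) • 1 := by
  obtain ⟨a, b, c, d, e, f, g, h, rfl⟩ := exists_eq_r8 u
  obtain ⟨a', b', c', d', e', f', g', h', rfl⟩ := exists_eq_r8 v
  rw [re_r8] at hu hv
  subst hu hv
  rw [Lmat_r8, Lmat_r8, r8_inner_r8]
  ext r s
  simp only [Matrix.add_apply, Matrix.mul_apply, Fin.sum_univ_eight, Matrix.smul_apply,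
    Matrix.one_apply]
  fin_cases r <;> fin_cases s <;> simp <;> ring

theorem re_octBasis {α : Fin 8} (hα : α ≠ 0) : CD.re (octBasis α) = 0 := by
  fin_cases α <;> first | exact absurd rfl hα | rfl

theorem inner_octBasis (α β : Fin 8) :
    CD.inner (octBasis α) (octBasis β) = if α = β then 1 else 0 := by
  fin_cases α <;> fin_cases β <;> simp [octBasis, r8_inner_r8]

/-- The coordinate `i` of `Fin (m * n)` lies in block `i / m`, at position `i % m`. -/
def blockEquiv (m n : ℕ) : Fin n × Fin m ≃ Fin (m * n) :=
  finProdFinEquiv.trans (finCongr (Nat.mul_comm n m))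

theorem diagExt_eq_submatrix_kronecker (m n : ℕ) (A : Matrix (Fin m) (Fin m) ℝ) :
    diagExt m n A = ((1 : Matrix (Fin n) (Fin n) ℝ) ⊗ₖ A).submatrix
      (blockEquiv m n).symm (blockEquiv m n).symm := by
  ext i j
  rcases Nat.eq_zero_or_pos m with rfl | hm
  · exact absurd i.isLt (by simp)
  simp [diagExt, blockEquiv, hm, Matrix.one_apply, Fin.ext_iff, Fin.divNat, Fin.modNat]

section diagExt

variable {m n : ℕ}

theorem diagExt_transpose (A : Matrix (Fin m) (Fin m) ℝ) :
    diagExt m n Aᵀ = (diagExt m n A)ᵀ := by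
  simp only [diagExt_eq_submatrix_kronecker, Matrix.transpose_submatrix,
    ← Matrix.kroneckerMap_transpose, Matrix.transpose_one]

theorem diagExt_neg (A : Matrix (Fin m) (Fin m) ℝ) : diagExt m n (-A) = -diagExt m n A := by
  ext i j
  simp [diagExt_eq_submatrix_kronecker]

theorem diagExt_add (A B : Matrix (Fin m) (Fin m) ℝ) :
    diagExt m n (A + B) = diagExt m n A + diagExt m n B := by
  ext i j
  simp [diagExt_eq_submatrix_kronecker, mul_add]

theorem diagExt_mul (A B : Matrix (Fin m) (Fin m) ℝ) :
    diagExt m n (A * B) = diagExt m n A * diagExt m n B := by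
  simp only [diagExt_eq_submatrix_kronecker, Matrix.submatrix_mul_equiv,
    ← Matrix.mul_kronecker_mul, Matrix.one_mul]

theorem diagExt_smul_one (c : ℝ) : diagExt m n (c • 1) = c • 1 := by
  rw [diagExt_eq_submatrix_kronecker, Matrix.kronecker_smul, Matrix.one_kronecker_one]
  ext i j
  simp [Matrix.one_apply]

theorem diagExt_transpose_of_transpose_eq_neg {A : Matrix (Fin m) (Fin m) ℝ} (hA : Aᵀ = -A) :
    (diagExt m n A)ᵀ = -diagExt m n A := by
  rw [← diagExt_transpose, hA, diagExt_neg]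

theorem diagExt_mul_add_mul {A B : Matrix (Fin m) (Fin m) ℝ} {c : ℝ}
    (h : A * B + B * A = -(2 * c) • 1) :
    diagExt m n A * diagExt m n B + diagExt m n B * diagExt m n A = -(2 * c) • 1 := by
  rw [← diagExt_mul, ← diagExt_mul, ← diagExt_add, h, diagExt_smul_one]

end diagExt

section skew

variable {ι R : Type*} [Fintype ι] [CommRing R] {A B : Matrix ι ι R}

theorem mulVec_dotProduct_of_transpose_eq_neg (hA : Aᵀ = -A) (x y : ι → R) :
    A *ᵥ x ⬝ᵥ y = -(x ⬝ᵥ A *ᵥ y) := by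
  rw [dotProduct_comm, dotProduct_mulVec, ← Matrix.mulVec_transpose, hA, Matrix.neg_mulVec,
    neg_dotProduct, dotProduct_comm]

variable [IsAddTorsionFree R]

theorem mulVec_dotProduct_self_of_transpose_eq_neg (hA : Aᵀ = -A) (x : ι → R) :
    A *ᵥ x ⬝ᵥ x = 0 := by
  have h := mulVec_dotProduct_of_transpose_eq_neg hA x x
  rw [dotProduct_comm x] at h
  exact self_eq_neg.mp h

theorem mulVec_dotProduct_mulVec_of_mul_add_mul [DecidableEq ι] (hA : Aᵀ = -A) (hB : Bᵀ = -B)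
    {c : R} (hAB : A * B + B * A = -(2 * c) • 1) (x : ι → R) :
    A *ᵥ x ⬝ᵥ B *ᵥ x = c * (x ⬝ᵥ x) := by
  have hsum : x ⬝ᵥ A *ᵥ B *ᵥ x + x ⬝ᵥ B *ᵥ A *ᵥ x = -(2 * c) * (x ⬝ᵥ x) := by
    rw [Matrix.mulVec_mulVec, Matrix.mulVec_mulVec, ← dotProduct_add, ← Matrix.add_mulVec, hAB,
      Matrix.smul_mulVec, Matrix.one_mulVec, dotProduct_smul, smul_eq_mul]
  rw [← sub_eq_zero, ← self_eq_neg]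
  linear_combination mulVec_dotProduct_of_transpose_eq_neg hA x (B *ᵥ x) +
    mulVec_dotProduct_of_transpose_eq_neg hB x (A *ᵥ x) - hsum +
    dotProduct_comm (A *ᵥ x) (B *ᵥ x)

end skew

/-- The left multiplications `L_u` by the seven imaginary
octonion units are skew-symmetric, square to `-Id₈` and pairwise anticommute;
consequently they give `7` orthonormal tangent vector fields on `S^7`, and
their diagonal extensions give `7` orthonormal tangent vector fields on
`S^(8n-1)` for every `n`. -/
theorem seven_fields_from_left_multiplications :
    (∀ α : Fin 8, 1 ≤ α.val →
      (Lmat (octBasis α))ᵀ = -Lmat (octBasis α) ∧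
      Lmat (octBasis α) * Lmat (octBasis α) = -1) ∧
    (∀ α β : Fin 8, 1 ≤ α.val → 1 ≤ β.val → α ≠ β →
      Lmat (octBasis α) * Lmat (octBasis β) + Lmat (octBasis β) * Lmat (octBasis α) = 0) ∧
    (∀ n : ℕ, ∀ x : Fin (8 * n) → ℝ, x ⬝ᵥ x = 1 →
      ∀ α β : Fin 8, 1 ≤ α.val → 1 ≤ β.val →
        (diagExt 8 n (Lmat (octBasis α))).mulVec x ⬝ᵥ x = 0 ∧
        (diagExt 8 n (Lmat (octBasis α))).mulVec x ⬝ᵥ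
            (diagExt 8 n (Lmat (octBasis β))).mulVec x = if α = β then 1 else 0) := by
  have re_zero : ∀ α : Fin 8, 1 ≤ α.val → CD.re (octBasis α) = 0 :=
    fun α hα => re_octBasis (by rintro rfl; simp at hα)
  have skew : ∀ α : Fin 8, 1 ≤ α.val → (Lmat (octBasis α))ᵀ = -Lmat (octBasis α) :=
    fun α hα => Lmat_transpose_of_re_eq_zero (re_zero α hα)
  have clifford : ∀ α β : Fin 8, 1 ≤ α.val → 1 ≤ β.val →
      Lmat (octBasis α) * Lmat (octBasis β) + Lmat (octBasis β) * Lmat (octBasis α) =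
        -(2 * if α = β then 1 else 0 : ℝ) • 1 := fun α β hα hβ => by
    rw [Lmat_mul_add_mul_of_re_eq_zero (re_zero α hα) (re_zero β hβ), inner_octBasis]
  refine ⟨fun α hα => ⟨skew α hα, ?_⟩, fun α β hα hβ hne => ?_,
    fun n x hx α β hα hβ => ⟨?_, ?_⟩⟩
  · have h := clifford α α hα hα
    rw [if_pos rfl] at h
    linear_combination (norm := module) (1 / 2 : ℝ) • h
  · simpa [hne] using clifford α β hα hβ
  · exact mulVec_dotProduct_self_of_transpose_eq_neg
      (diagExt_transpose_of_transpose_eq_neg (skew α hα)) x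
  · rw [mulVec_dotProduct_mulVec_of_mul_add_mul
      (diagExt_transpose_of_transpose_eq_neg (skew α hα))
      (diagExt_transpose_of_transpose_eq_neg (skew β hβ))
      (diagExt_mul_add_mul (clifford α β hα hβ)), hx, mul_one]
end
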